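/- Let g be a Lie algebra over a field of characteristic 0, and y₁, y₂ ∈ g with [y₁,y₂] = 0 and (ad y₁)³ = (ad y₂)³ = 0 and Im((ad yᵢ)²) ⊆ span{yᵢ}. Then every nonzero element x of the plane span{y₁, y₂} is ad-nilpotent; in fact (ad x)³ = 0. -/

import Mathlib

/-- Every nonzero element of the commutative plane `span {y₁, y₂}` is
ad-nilpotent; in fact its adjoint map cubes to zero. -/
theorem plane_elements_ad_nilpotent
    {k L : Type*} [Field k] [CharZero k] [LieRing L] [LieAlgebra k L]
    (y₁ y₂ : L) (hcomm : ⁅y₁, y₂⁆ = 0)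
    (h₁ : (LieAlgebra.ad k L y₁) ^ 3 = 0)
    (h₂ : (LieAlgebra.ad k L y₂) ^ 3 = 0)
    (hr₁ : LinearMap.range ((LieAlgebra.ad k L y₁) ^ 2) ≤ Submodule.span k {y₁})
    (hr₂ : LinearMap.range ((LieAlgebra.ad k L y₂) ^ 2) ≤ Submodule.span k {y₂}) :
    ∀ x ∈ Submodule.span k ({y₁, y₂} : Set L), x ≠ 0 →
      IsNilpotent (LieAlgebra.ad k L x) ∧ (LieAlgebra.ad k L x) ^ 3 = 0 := by
  intro x hx _
  set A := LieAlgebra.ad k L y₁ with hA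
  set B := LieAlgebra.ad k L y₂ with hB
  have hAB : A * B = B * A := by
    ext z
    show ⁅y₁, ⁅y₂, z⁆⁆ = ⁅y₂, ⁅y₁, z⁆⁆
    rw [leibniz_lie, hcomm, zero_lie, zero_add]
  have hBy₁ : B y₁ = 0 := by
    show ⁅y₂, y₁⁆ = 0
    rw [← lie_skew, hcomm, neg_zero]
  have hAy₂ : A y₂ = 0 := hcomm
  have hBA2 : B * A ^ 2 = 0 := by
    ext z
    obtain ⟨c, hc⟩ := Submodule.mem_span_singleton.mp
      (hr₁ (LinearMap.mem_range_self (A ^ 2) z))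
    simp only [Module.End.mul_apply, LinearMap.zero_apply]
    rw [← hc, map_smul, hBy₁, smul_zero]
  have hAB2 : A * B ^ 2 = 0 := by
    ext z
    obtain ⟨c, hc⟩ := Submodule.mem_span_singleton.mp
      (hr₂ (LinearMap.mem_range_self (B ^ 2) z))
    simp only [Module.End.mul_apply, LinearMap.zero_apply]
    rw [← hc, map_smul, hAy₂, smul_zero]
  have hA2B : A ^ 2 * B = 0 := by
    calc A ^ 2 * B = A * (A * B) := by rw [pow_two, mul_assoc]
    _ = A * (B * A) := by rw [hAB]
    _ = (A * B) * A := by rw [mul_assoc]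
    _ = (B * A) * A := by rw [hAB]
    _ = B * A ^ 2 := by rw [pow_two, mul_assoc]
    _ = 0 := hBA2
  have hB2A : B ^ 2 * A = 0 := by
    calc B ^ 2 * A = B * (B * A) := by rw [pow_two, mul_assoc]
    _ = B * (A * B) := by rw [hAB]
    _ = (B * A) * B := by rw [mul_assoc]
    _ = (A * B) * B := by rw [hAB]
    _ = A * B ^ 2 := by rw [pow_two, mul_assoc]
    _ = 0 := hAB2
  obtain ⟨a, b, hab⟩ := Submodule.mem_span_pair.mp hx
  have hadx : LieAlgebra.ad k L x = a • A + b • B := by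
    rw [← hab, map_add, map_smul, map_smul]
  have hcube : (LieAlgebra.ad k L x) ^ 3 = 0 := by
    rw [hadx]
    have hcomm' : Commute (a • A) (b • B) := by
      unfold Commute SemiconjBy
      rw [smul_mul_smul_comm, smul_mul_smul_comm, hAB, mul_comm a b]
    rw [hcomm'.add_pow]
    simp [Finset.sum_range_succ, smul_pow, smul_mul_assoc, mul_smul_comm,
      hA2B, hB2A, hAB2, hBA2, h₁, h₂]
  exact ⟨⟨3, hcube⟩, hcube⟩
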